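/- (One-step linear contraction for exact DPO-Unif.) Let R ≥ 1 and let θ ∈ ℝ^𝒴 satisfy |β(θ_a − θ_{a'})| ≤ R for all a, a' ∈ 𝒴. Let θ' ∈ ℝ^𝒴 be obtained by one exact DPO-Unif step with learning rate η = 1/(β²A): θ'_a = θ_a + (4/(βA)) Σ_{a''∈𝒴} Δ(a,a'';θ) for every a. Then for all a, a' ∈ 𝒴, |δ(a,a';θ')| ≤ (2 − 8σ'(R)) · max_{b,b'∈𝒴} |δ(b,b';θ)|. -/

import Mathlib

/-- The sigmoid function. -/
noncomputable def sig (x : ℝ) : ℝ := 1 / (1 + Real.exp (-x))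

/-- The derivative of the sigmoid function. -/
noncomputable def sig' (x : ℝ) : ℝ := sig x * (1 - sig x)

/-!
With `g t = t - 4 σ(t)` one has `δ_{ab} - 4Δ_{ab} = g(r_a - r_b) - g(β(θ_a - θ_b))`, and
`g' = 1 - 4σ'` lies in `[0, 1 - 4σ'(R)]` on `[-R, R]`, which contains both arguments since
`|r_a - r_b| ≤ 1 ≤ R`. So the mean value theorem gives `|δ_{ab} - 4Δ_{ab}| ≤ (1 - 4σ'(R)) M` with
`M = max |δ|`. As `δ_{aa'} = δ_{ab} - δ_{a'b}` for every `b`, the update reads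
`δ'_{aa'} = A⁻¹ ∑_b ((δ_{ab} - 4Δ_{ab}) - (δ_{a'b} - 4Δ_{a'b}))`, and the triangle inequality
finishes.
-/

open Finset

lemma sig_eq_sigmoid : sig = Real.sigmoid := by
  funext x
  rw [sig, Real.sigmoid_def, one_div]

lemma hasDerivAt_sig (x : ℝ) : HasDerivAt sig (sig' x) x := by
  rw [sig', sig_eq_sigmoid]
  exact Real.hasDerivAt_sigmoid x

lemma sig'_eq_inv_two_add_two_mul_cosh (x : ℝ) : sig' x = (2 + 2 * Real.cosh x)⁻¹ := by
  have hexp : Real.exp x ≠ 0 := (Real.exp_pos x).ne'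
  rw [sig', sig, Real.cosh_eq, Real.exp_neg]
  field_simp
  ring

lemma sig'_le_one_div_four (x : ℝ) : sig' x ≤ 1 / 4 := by
  rw [sig'_eq_inv_two_add_two_mul_cosh, one_div]
  gcongr
  linarith [Real.one_le_cosh x]

lemma sig'_le_sig'_of_abs_le {x R : ℝ} (h : |x| ≤ R) : sig' R ≤ sig' x := by
  rw [sig'_eq_inv_two_add_two_mul_cosh, sig'_eq_inv_two_add_two_mul_cosh]
  gcongr
  exact Real.cosh_le_cosh.mpr (h.trans (le_abs_self R))

lemma abs_sub_sub_four_mul_sig_sub_le {x y R : ℝ} (hx : |x| ≤ R) (hy : |y| ≤ R) :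
    |x - y - 4 * (sig x - sig y)| ≤ (1 - 4 * sig' R) * |x - y| := by
  have hderiv : ∀ t ∈ Set.Icc (-R) R,
      HasDerivWithinAt (fun t => t - 4 * sig t) (1 - 4 * sig' t) (Set.Icc (-R) R) t :=
    fun t _ => ((hasDerivAt_id t).sub ((hasDerivAt_sig t).const_mul 4)).hasDerivWithinAt
  have hbound : ∀ t ∈ Set.Icc (-R) R, ‖1 - 4 * sig' t‖ ≤ 1 - 4 * sig' R := by
    intro t ht
    have hmono := sig'_le_sig'_of_abs_le (abs_le.mpr ht)
    rw [Real.norm_eq_abs, abs_of_nonneg (by linarith [sig'_le_one_div_four t])]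
    linarith
  have := (convex_Icc (-R) R).norm_image_sub_le_of_norm_hasDerivWithin_le hderiv hbound
    (abs_le.mp hy) (abs_le.mp hx)
  simp only [Real.norm_eq_abs] at this
  convert this using 2
  ring

section DPOUnif

variable {Y : Type*} [Fintype Y]

/-- `δ(a, a'; θ)`. -/
def gapError (r : Y → ℝ) (β : ℝ) (θ : Y → ℝ) (a a' : Y) : ℝ :=
  r a - r a' - β * (θ a - θ a')

/-- `Δ(a, a'; θ)`. -/
noncomputable def sigmoidGap (r : Y → ℝ) (β : ℝ) (θ : Y → ℝ) (a a' : Y) : ℝ :=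
  sig (r a - r a') - sig (β * (θ a - θ a'))

lemma gapError_eq_average (r : Y → ℝ) (β : ℝ) (θ : Y → ℝ) (a a' : Y) :
    gapError r β θ a a' =
      (Fintype.card Y : ℝ)⁻¹ * ∑ b, (gapError r β θ a b - gapError r β θ a' b) := by
  have : Nonempty Y := ⟨a⟩
  have hcard : (Fintype.card Y : ℝ) ≠ 0 := Nat.cast_ne_zero.mpr Fintype.card_ne_zero
  have hcocycle : ∀ b, gapError r β θ a b - gapError r β θ a' b = gapError r β θ a a' := by
    intro b
    simp only [gapError]
    ring
  simp only [hcocycle, sum_const, card_univ, nsmul_eq_mul]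
  field_simp

lemma gapError_update {r : Y → ℝ} {β : ℝ} (hβ : β ≠ 0) {θ θ' : Y → ℝ}
    (hupd : ∀ a, θ' a = θ a + (4 / (β * Fintype.card Y)) * ∑ b, sigmoidGap r β θ a b) (a a' : Y) :
    gapError r β θ' a a' = (Fintype.card Y : ℝ)⁻¹ * ∑ b,
      ((gapError r β θ a b - 4 * sigmoidGap r β θ a b) -
        (gapError r β θ a' b - 4 * sigmoidGap r β θ a' b)) := by
  have : Nonempty Y := ⟨a⟩
  have hcard : (Fintype.card Y : ℝ) ≠ 0 := Nat.cast_ne_zero.mpr Fintype.card_ne_zero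
  have hsplit : ∑ b, ((gapError r β θ a b - 4 * sigmoidGap r β θ a b) -
      (gapError r β θ a' b - 4 * sigmoidGap r β θ a' b)) =
      ∑ b, (gapError r β θ a b - gapError r β θ a' b) -
        4 * (∑ b, sigmoidGap r β θ a b - ∑ b, sigmoidGap r β θ a' b) := by
    rw [mul_sub, mul_sum, mul_sum, ← sum_sub_distrib, ← sum_sub_distrib]
    exact sum_congr rfl fun b _ => by ring
  rw [hsplit, mul_sub, ← gapError_eq_average, gapError, gapError, hupd a, hupd a']
  field_simp
  ring

lemma abs_inv_card_mul_sum_sub_le [Nonempty Y] {f g : Y → ℝ} {c : ℝ} (hf : ∀ b, |f b| ≤ c)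
    (hg : ∀ b, |g b| ≤ c) : |(Fintype.card Y : ℝ)⁻¹ * ∑ b, (f b - g b)| ≤ 2 * c := by
  have hcard : (0 : ℝ) < Fintype.card Y := Nat.cast_pos.mpr Fintype.card_pos
  rw [abs_mul, abs_inv, abs_of_pos hcard, inv_mul_le_iff₀ hcard]
  calc |∑ b, (f b - g b)| ≤ ∑ b, |f b - g b| := abs_sum_le_sum_abs _ _
    _ ≤ ∑ _b : Y, 2 * c := sum_le_sum fun b _ => (abs_sub _ _).trans (by linarith [hf b, hg b])
    _ = Fintype.card Y * (2 * c) := by simp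

end DPOUnif

theorem dpo_unif_one_step_contraction_general
    {Y : Type*} [Fintype Y]
    (A : ℕ) (hA : A = Fintype.card Y)
    (r : Y → ℝ) (hr : ∀ a, 0 ≤ r a ∧ r a ≤ 1)
    (β : ℝ) (hβ : 0 < β)
    (R : ℝ) (hR : 1 ≤ R)
    (θ θ' : Y → ℝ)
    (hbound : ∀ a a', |β * (θ a - θ a')| ≤ R)
    (hupd : ∀ a, θ' a = θ a +
      (4 / (β * A)) * ∑ a'' : Y, (sig (r a - r a'') - sig (β * (θ a - θ a'')))) :
    ∀ a a' : Y,
      |r a - r a' - β * (θ' a - θ' a')| ≤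
        (2 - 8 * sig' R) * ⨆ p : Y × Y, |r p.1 - r p.2 - β * (θ p.1 - θ p.2)| := by
  intro a a'
  subst hA
  have : Nonempty Y := ⟨a⟩
  set M := ⨆ p : Y × Y, |r p.1 - r p.2 - β * (θ p.1 - θ p.2)|
  have hM : ∀ p q, |gapError r β θ p q| ≤ M := fun p q =>
    le_ciSup (f := fun p : Y × Y => |gapError r β θ p.1 p.2|) (Set.finite_range _).bddAbove (p, q)
  have hreward : ∀ p q, |r p - r q| ≤ R := fun p q => by
    rw [abs_le]
    constructor <;> linarith [hr p, hr q]
  have hcontract : 0 ≤ 1 - 4 * sig' R := by linarith [sig'_le_one_div_four R]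
  have hterm : ∀ p q, |gapError r β θ p q - 4 * sigmoidGap r β θ p q| ≤ (1 - 4 * sig' R) * M :=
    fun p q => (abs_sub_sub_four_mul_sig_sub_le (hreward p q) (hbound p q)).trans
      (mul_le_mul_of_nonneg_left (hM p q) hcontract)
  change |gapError r β θ' a a'| ≤ _
  rw [gapError_update hβ.ne' hupd, show 2 - 8 * sig' R = 2 * (1 - 4 * sig' R) by ring, mul_assoc]
  exact abs_inv_card_mul_sum_sub_le (hterm a) (hterm a')

/-- **One-step linear contraction for exact DPO-Unif.**
If all logit gaps `β(θ_a - θ_{a'})` are bounded by `R ≥ 1`, then one exact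
DPO-Unif step with learning rate `η = 1/(β²A)` contracts the reward-gap
errors by a factor `2 - 8σ'(R)`. -/
theorem dpo_unif_one_step_contraction
    {Y : Type*} [Fintype Y] [Nonempty Y]
    (A : ℕ) (hA : A = Fintype.card Y)
    (r : Y → ℝ) (hr : ∀ a, 0 ≤ r a ∧ r a ≤ 1)
    (β : ℝ) (hβ : 0 < β)
    (R : ℝ) (hR : 1 ≤ R)
    (θ θ' : Y → ℝ)
    (hbound : ∀ a a', |β * (θ a - θ a')| ≤ R)
    (hupd : ∀ a, θ' a = θ a +
      (4 / (β * A)) * ∑ a'' : Y, (sig (r a - r a'') - sig (β * (θ a - θ a'')))) :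
    ∀ a a' : Y,
      |r a - r a' - β * (θ' a - θ' a')| ≤
        (2 - 8 * sig' R) * ⨆ p : Y × Y, |r p.1 - r p.2 - β * (θ p.1 - θ p.2)| :=
  dpo_unif_one_step_contraction_general A hA r hr β hβ R hR θ θ' hbound hupd
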